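/- Let N, M ≥ 1 be integers and λ > 0, and set c_{N,M} = λ(N−M)² + (N+M)(1−λ). On the open set Ω = {(x,y) ∈ ℝ^N × ℝ^M : x_1 < ⋯ < x_N, y_1 < ⋯ < y_M, and x_N < y_1} define F_{N,M}(x,y) = ∏_{j=1}^N e^{−x_j²/2} · ∏_{J=1}^M e^{+y_J²/2} · ∏_{1≤j<k≤N} (x_k−x_j)^λ · ∏_{1≤J<K≤M} (y_K−y_J)^λ / ∏_{j=1}^N ∏_{K=1}^M (y_K−x_j)^λ. Then on Ω one has H_N(x) F_{N,M}(x,y) = ( H_M(y) + c_{N,M} ) F_{N,M}(x,y), where H_N(x) is the Calogero Hamiltonian with coupling λ in the N variables x and H_M(y) the Calogero Hamiltonian with coupling λ in the M variables y. -/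

import Mathlib

/-- Partial derivative in the `j`-th coordinate of a function on `ℝ^N`. -/
noncomputable def pd {N : ℕ} (j : Fin N) (f : (Fin N → ℝ) → ℝ) : (Fin N → ℝ) → ℝ :=
  fun x => deriv (fun t => f (Function.update x j t)) (x j)

/-- The Calogero Hamiltonian with coupling `lam` in `N` variables. -/
noncomputable def calogeroH (N : ℕ) (lam : ℝ) (f : (Fin N → ℝ) → ℝ) : (Fin N → ℝ) → ℝ :=
  fun x => (∑ j, (- pd j (pd j f) x + (x j)^2 * f x)) +
    2*lam*(lam-1) * ∑ j, ∑ k, (if j < k then f x / (x j - x k)^2 else 0)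

/-- The kernel function `F_{N,M}(x,y)` with different particle numbers. -/
noncomputable def FNM (N M : ℕ) (lam : ℝ) (x : Fin N → ℝ) (y : Fin M → ℝ) : ℝ :=
  (∏ j, Real.exp (-(x j)^2/2)) * (∏ J, Real.exp ((y J)^2/2)) *
  (∏ j, ∏ k, (if j < k then (x k - x j) ^ lam else 1)) *
  (∏ J, ∏ K, (if J < K then (y K - y J) ^ lam else 1)) /
  ∏ j, ∏ K, (y K - x j) ^ lam

open Finset Real Function

noncomputable def LL (N M : ℕ) (lam : ℝ) (x : Fin N → ℝ) (y : Fin M → ℝ) : ℝ :=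
  (∑ j, -(x j)^2/2) + (∑ J, (y J)^2/2)
  + (∑ j, ∑ k, if j < k then lam * Real.log (x k - x j) else 0)
  + (∑ J, ∑ K, if J < K then lam * Real.log (y K - y J) else 0)
  - ∑ j, ∑ K, lam * Real.log (y K - x j)

lemma FNM_exp (N M : ℕ) (lam : ℝ) (x : Fin N → ℝ) (y : Fin M → ℝ)
    (hx : ∀ j k : Fin N, j < k → x j < x k) (hy : ∀ J K : Fin M, J < K → y J < y K)
    (hxy : ∀ (j : Fin N) (K : Fin M), x j < y K) :
    FNM N M lam x y = Real.exp (LL N M lam x y) := by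
  unfold FNM LL
  rw [Real.exp_sub, Real.exp_add, Real.exp_add, Real.exp_add]
  have h1 : Real.exp (∑ j, -(x j)^2/2) = ∏ j, Real.exp (-(x j)^2/2) := Real.exp_sum _ _
  have h2 : Real.exp (∑ J, (y J)^2/2) = ∏ J, Real.exp ((y J)^2/2) := Real.exp_sum _ _
  have h3 : Real.exp (∑ j, ∑ k, if j < k then lam * Real.log (x k - x j) else 0)
      = ∏ j, ∏ k, (if j < k then (x k - x j) ^ lam else 1) := by
    rw [Real.exp_sum]
    refine Finset.prod_congr rfl fun j _ => ?_
    rw [Real.exp_sum]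
    refine Finset.prod_congr rfl fun k _ => ?_
    by_cases h : j < k
    · rw [if_pos h, if_pos h, Real.rpow_def_of_pos (sub_pos.2 (hx j k h)), mul_comm]
    · rw [if_neg h, if_neg h, Real.exp_zero]
  have h4 : Real.exp (∑ J, ∑ K, if J < K then lam * Real.log (y K - y J) else 0)
      = ∏ J, ∏ K, (if J < K then (y K - y J) ^ lam else 1) := by
    rw [Real.exp_sum]
    refine Finset.prod_congr rfl fun J _ => ?_
    rw [Real.exp_sum]
    refine Finset.prod_congr rfl fun K _ => ?_
    by_cases h : J < K
    · rw [if_pos h, if_pos h, Real.rpow_def_of_pos (sub_pos.2 (hy J K h)), mul_comm]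
    · rw [if_neg h, if_neg h, Real.exp_zero]
  have h5 : Real.exp (∑ j, ∑ K, lam * Real.log (y K - x j))
      = ∏ j, ∏ K, (y K - x j) ^ lam := by
    rw [Real.exp_sum]
    refine Finset.prod_congr rfl fun j _ => ?_
    rw [Real.exp_sum]
    refine Finset.prod_congr rfl fun K _ => ?_
    rw [Real.rpow_def_of_pos (sub_pos.2 (hxy j K)), mul_comm]
  rw [h1, h2, h3, h4, h5]

lemma hasDerivAt_sumsq (n : ℕ) (z : Fin n → ℝ) (j : Fin n) (t : ℝ) :
    HasDerivAt (fun s => ∑ k, (Function.update z j s k)^2/2) t t := by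
  have h : ∀ k : Fin n, HasDerivAt (fun s => (Function.update z j s k)^2/2)
      (if k = j then t else 0) t := by
    intro k
    rcases eq_or_ne k j with h | h
    · subst h
      have h2 : HasDerivAt (fun s : ℝ => s^2/2) t t := by
        simpa using (hasDerivAt_pow 2 t).div_const 2
      simpa using h2
    · simp only [Function.update_of_ne h, if_neg h]
      exact hasDerivAt_const t _
  have := HasDerivAt.fun_sum (u := Finset.univ) fun k _ => h k
  simpa [Finset.sum_ite_eq'] using this
lemma hasDerivAt_pairlog (n : ℕ) (z : Fin n → ℝ) (j : Fin n) (lam t : ℝ)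
    (h1 : ∀ k, k < j → z k < t) (h2 : ∀ l, j < l → t < z l) :
    HasDerivAt (fun s => ∑ k, ∑ l, if k < l then
        lam * Real.log (Function.update z j s l - Function.update z j s k) else 0)
      (lam * ∑ k, if k ≠ j then (t - z k)⁻¹ else 0) t := by
  set D : Fin n → Fin n → ℝ := fun k l => if k < l then
      (if l = j then lam * (t - z k)⁻¹ else if k = j then -(lam * (z l - t)⁻¹) else 0)
    else 0 with hD
  have hterm : ∀ k l : Fin n, HasDerivAt (fun s => if k < l then
      lam * Real.log (Function.update z j s l - Function.update z j s k) else 0) (D k l) t := by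
    intro k l
    by_cases hkl : k < l
    · rcases eq_or_ne l j with hl | hl
      · have hkj : k ≠ j := by rw [← hl]; exact ne_of_lt hkl
        have hne : t - z k ≠ 0 := ne_of_gt (sub_pos.2 (h1 k (hl ▸ hkl)))
        have hd : HasDerivAt (fun s : ℝ => lam * Real.log (s - z k)) (lam * (t - z k)⁻¹) t := by
          have := (((hasDerivAt_id t).sub_const (z k)).log hne).const_mul lam
          simpa [one_div] using this
        have hDv : D k l = lam * (t - z k)⁻¹ := by simp only [hD]; rw [if_pos hkl, if_pos hl]
        have hfun : (fun s => if k < l then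
            lam * Real.log (Function.update z j s l - Function.update z j s k) else 0)
            = (fun s : ℝ => lam * Real.log (s - z k)) := by
          funext s
          rw [if_pos hkl, hl, Function.update_self, Function.update_of_ne hkj]
        rw [hDv, hfun]
        exact hd
      · rcases eq_or_ne k j with hk | hk
        · have hne : z l - t ≠ 0 := ne_of_gt (sub_pos.2 (h2 l (hk ▸ hkl)))
          have hd : HasDerivAt (fun s : ℝ => lam * Real.log (z l - s))
              (-(lam * (z l - t)⁻¹)) t := by
            have := (((hasDerivAt_const t (z l)).sub (hasDerivAt_id t)).log hne).const_mul lam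
            refine this.congr_deriv ?_
            simp only [Pi.sub_apply, id]
            field_simp
            ring
          have hDv : D k l = -(lam * (z l - t)⁻¹) := by simp only [hD]; rw [if_pos hkl, if_neg hl, if_pos hk]
          have hfun : (fun s => if k < l then
              lam * Real.log (Function.update z j s l - Function.update z j s k) else 0)
              = (fun s : ℝ => lam * Real.log (z l - s)) := by
            funext s
            rw [if_pos hkl, Function.update_of_ne hl, hk, Function.update_self]
          rw [hDv, hfun]
          exact hd
        · have hDv : D k l = 0 := by simp only [hD]; rw [if_pos hkl, if_neg hl, if_neg hk]
          have hfun : (fun s => if k < l then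
              lam * Real.log (Function.update z j s l - Function.update z j s k) else 0)
              = (fun _ : ℝ => lam * Real.log (z l - z k)) := by
            funext s
            rw [if_pos hkl, Function.update_of_ne hl, Function.update_of_ne hk]
          rw [hDv, hfun]
          exact hasDerivAt_const t _
    · have hDv : D k l = 0 := by simp only [hD]; rw [if_neg hkl]
      have hfun : (fun s => if k < l then
          lam * Real.log (Function.update z j s l - Function.update z j s k) else 0)
          = (fun _ : ℝ => (0:ℝ)) := by
        funext s; rw [if_neg hkl]
      rw [hDv, hfun]
      exact hasDerivAt_const t _
  have hsum : HasDerivAt (fun s => ∑ k, ∑ l, if k < l then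
      lam * Real.log (Function.update z j s l - Function.update z j s k) else 0)
      (∑ k, ∑ l, D k l) t :=
    HasDerivAt.fun_sum fun k _ => HasDerivAt.fun_sum fun l _ => hterm k l
  have hval : ∑ k, ∑ l, D k l = lam * ∑ k, (if k ≠ j then (t - z k)⁻¹ else 0) := by
    have hsplit : ∀ k l : Fin n, D k l
        = (if l = j then (if k < j then lam * (t - z k)⁻¹ else 0) else 0)
          + (if k = j then (if j < l then -(lam * (z l - t)⁻¹) else 0) else 0) := by
      intro k l
      rw [hD]
      by_cases hkl : k < l
      · rcases eq_or_ne l j with hl | hl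
        · have hkj : k ≠ j := by rw [← hl]; exact ne_of_lt hkl
          have hkj' : k < j := hl ▸ hkl
          simp [hkl, hl, hkj, hkj']
        · rcases eq_or_ne k j with hk | hk
          · have hjl : j < l := hk ▸ hkl
            simp [hkl, hl, hk, hjl]
          · simp [hkl, hl, hk]
      · have e1 : l = j → ¬ k < j := fun a b => hkl (by rw [a]; exact b)
        have e2 : k = j → ¬ j < l := fun a b => hkl (by rw [a]; exact b)
        rcases eq_or_ne l j with hl | hl
        · rcases eq_or_ne k j with hk | hk
          · simp [hkl, hl, hk, e1 hl, e2 hk]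
          · simp [hkl, hl, hk, e1 hl]
        · rcases eq_or_ne k j with hk | hk
          · simp [hkl, hl, hk, e2 hk]
          · simp [hkl, hl, hk]
    rw [Finset.sum_congr rfl fun k _ => Finset.sum_congr rfl fun l _ => hsplit k l]
    simp only [Finset.sum_add_distrib]
    have hA : (∑ k : Fin n, ∑ l : Fin n,
        (if l = j then (if k < j then lam * (t - z k)⁻¹ else 0) else 0))
        = ∑ k, (if k < j then lam * (t - z k)⁻¹ else 0) := by
      refine Finset.sum_congr rfl fun k _ => ?_
      rw [Finset.sum_ite_eq' Finset.univ j]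
      simp
    have hB : (∑ k : Fin n, ∑ l : Fin n,
        (if k = j then (if j < l then -(lam * (z l - t)⁻¹) else 0) else 0))
        = ∑ l, (if j < l then lam * (t - z l)⁻¹ else 0) := by
      rw [Finset.sum_comm]
      refine Finset.sum_congr rfl fun l _ => ?_
      rw [Finset.sum_ite_eq' Finset.univ j]
      simp only [Finset.mem_univ, if_true]
      rcases lt_or_ge j l with h | h
      · rw [if_pos h, if_pos h, show t - z l = -(z l - t) by ring, inv_neg]
        ring
      · rw [if_neg (not_lt_of_ge h), if_neg (not_lt_of_ge h)]
    rw [hA, hB, Finset.mul_sum, ← Finset.sum_add_distrib]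
    refine Finset.sum_congr rfl fun k _ => ?_
    rcases lt_trichotomy k j with h | h | h
    · simp [h, not_lt_of_gt h, ne_of_lt h, mul_comm]
    · simp [h, lt_irrefl]
    · simp [h, not_lt_of_gt h, ne_of_gt h, mul_comm]
  rw [hval] at hsum
  exact hsum
lemma hasDerivAt_mixedx (n m : ℕ) (z : Fin n → ℝ) (w : Fin m → ℝ) (j : Fin n) (lam t : ℝ)
    (h : ∀ K, w K - t ≠ 0) :
    HasDerivAt (fun s => ∑ k, ∑ K, lam * Real.log (w K - Function.update z j s k))
      (-(lam * ∑ K, (w K - t)⁻¹)) t := by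
  have hterm : ∀ (k : Fin n) (K : Fin m),
      HasDerivAt (fun s => lam * Real.log (w K - Function.update z j s k))
        (if k = j then -(lam * (w K - t)⁻¹) else 0) t := by
    intro k K
    rcases eq_or_ne k j with hk | hk
    · have hd : HasDerivAt (fun s : ℝ => lam * Real.log (w K - s)) (-(lam * (w K - t)⁻¹)) t := by
        have := (((hasDerivAt_const t (w K)).sub (hasDerivAt_id t)).log (h K)).const_mul lam
        refine this.congr_deriv ?_
        simp only [Pi.sub_apply, id]
        field_simp
        ring
      have hfun : (fun s => lam * Real.log (w K - Function.update z j s k))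
          = (fun s : ℝ => lam * Real.log (w K - s)) := by
        funext s; rw [hk, Function.update_self]
      rw [if_pos hk, hfun]
      exact hd
    · have hfun : (fun s => lam * Real.log (w K - Function.update z j s k))
          = (fun _ : ℝ => lam * Real.log (w K - z k)) := by
        funext s; rw [Function.update_of_ne hk]
      rw [if_neg hk, hfun]
      exact hasDerivAt_const t _
  have hsum : HasDerivAt (fun s => ∑ k, ∑ K, lam * Real.log (w K - Function.update z j s k))
      (∑ k, ∑ K, (if k = j then -(lam * (w K - t)⁻¹) else 0)) t :=
    HasDerivAt.fun_sum fun k _ => HasDerivAt.fun_sum fun K _ => hterm k K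
  have hval : (∑ k : Fin n, ∑ K : Fin m, (if k = j then -(lam * (w K - t)⁻¹) else 0))
      = -(lam * ∑ K, (w K - t)⁻¹) := by
    rw [Finset.sum_comm]
    have : ∀ K : Fin m, (∑ k : Fin n, (if k = j then -(lam * (w K - t)⁻¹) else 0))
        = -(lam * (w K - t)⁻¹) := by
      intro K
      rw [Finset.sum_ite_eq' Finset.univ j]
      simp
    rw [Finset.sum_congr rfl fun K _ => this K]
    rw [Finset.mul_sum, ← Finset.sum_neg_distrib]
  rw [hval] at hsum
  exact hsum

lemma hasDerivAt_mixedy (n m : ℕ) (z : Fin n → ℝ) (w : Fin m → ℝ) (J : Fin m) (lam t : ℝ)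
    (h : ∀ k, t - z k ≠ 0) :
    HasDerivAt (fun s => ∑ k, ∑ K, lam * Real.log (Function.update w J s K - z k))
      (lam * ∑ k, (t - z k)⁻¹) t := by
  have hterm : ∀ (k : Fin n) (K : Fin m),
      HasDerivAt (fun s => lam * Real.log (Function.update w J s K - z k))
        (if K = J then lam * (t - z k)⁻¹ else 0) t := by
    intro k K
    rcases eq_or_ne K J with hK | hK
    · have hd : HasDerivAt (fun s : ℝ => lam * Real.log (s - z k)) (lam * (t - z k)⁻¹) t := by
        have := (((hasDerivAt_id t).sub_const (z k)).log (h k)).const_mul lam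
        simpa [one_div] using this
      have hfun : (fun s => lam * Real.log (Function.update w J s K - z k))
          = (fun s : ℝ => lam * Real.log (s - z k)) := by
        funext s; rw [hK, Function.update_self]
      rw [if_pos hK, hfun]
      exact hd
    · have hfun : (fun s => lam * Real.log (Function.update w J s K - z k))
          = (fun _ : ℝ => lam * Real.log (w K - z k)) := by
        funext s; rw [Function.update_of_ne hK]
      rw [if_neg hK, hfun]
      exact hasDerivAt_const t _
  have hsum := HasDerivAt.fun_sum (u := Finset.univ)
    fun k (_ : k ∈ Finset.univ) => HasDerivAt.fun_sum (u := Finset.univ)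
      fun K (_ : K ∈ Finset.univ) => hterm k K
  have hval : (∑ k : Fin n, ∑ K : Fin m, (if K = J then lam * (t - z k)⁻¹ else 0))
      = lam * ∑ k, (t - z k)⁻¹ := by
    have : ∀ k : Fin n, (∑ K : Fin m, (if K = J then lam * (t - z k)⁻¹ else 0))
        = lam * (t - z k)⁻¹ := by
      intro k
      rw [Finset.sum_ite_eq' Finset.univ J]
      simp
    rw [Finset.sum_congr rfl fun k _ => this k, Finset.mul_sum]
  rw [hval] at hsum
  exact hsum

/-- derivative of the logarithmic-derivative function, x-side -/
lemma hasDerivAt_gx (n m : ℕ) (z : Fin n → ℝ) (w : Fin m → ℝ) (j : Fin n) (lam t : ℝ)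
    (ha : ∀ k, k ≠ j → t - z k ≠ 0) (hb : ∀ K, w K - t ≠ 0) :
    HasDerivAt (fun s => -s + lam * (∑ k, if k ≠ j then (s - z k)⁻¹ else 0)
        + lam * ∑ K, (w K - s)⁻¹)
      (-1 + lam * (∑ k, if k ≠ j then -(((t - z k)^2)⁻¹) else 0)
        + lam * ∑ K, ((w K - t)^2)⁻¹) t := by
  have d1 : HasDerivAt (fun s : ℝ => -s) (-1) t := (hasDerivAt_id t).neg
  have d2 : HasDerivAt (fun s => ∑ k, if k ≠ j then (s - z k)⁻¹ else 0)
      (∑ k, if k ≠ j then -(((t - z k)^2)⁻¹) else 0) t := by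
    refine HasDerivAt.fun_sum fun k _ => ?_
    rcases eq_or_ne k j with hk | hk
    · have hfun : (fun s : ℝ => if k ≠ j then (s - z k)⁻¹ else 0) = (fun _ => (0:ℝ)) := by
        funext s; rw [if_neg (by simp [hk])]
      rw [if_neg (by simp [hk]), hfun]
      exact hasDerivAt_const t _
    · have := ((hasDerivAt_id t).sub_const (z k)).inv (ha k hk)
      have hfun : (fun s : ℝ => if k ≠ j then (s - z k)⁻¹ else 0)
          = (fun s : ℝ => (s - z k)⁻¹) := by
        funext s; rw [if_pos hk]
      rw [if_pos hk, hfun]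
      refine this.congr_deriv ?_
      simp only [Pi.sub_apply, id]
      field_simp
  have d3 : HasDerivAt (fun s => ∑ K, (w K - s)⁻¹) (∑ K, ((w K - t)^2)⁻¹) t := by
    refine HasDerivAt.fun_sum fun K _ => ?_
    have := ((hasDerivAt_const t (w K)).sub (hasDerivAt_id t)).inv (hb K)
    refine this.congr_deriv ?_
    simp only [Pi.sub_apply, id]
    field_simp
    ring
  exact (d1.add (d2.const_mul lam)).add (d3.const_mul lam)

/-- derivative of the logarithmic-derivative function, y-side -/
lemma hasDerivAt_gy (n m : ℕ) (z : Fin n → ℝ) (w : Fin m → ℝ) (J : Fin m) (lam t : ℝ)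
    (ha : ∀ L, L ≠ J → t - w L ≠ 0) (hb : ∀ k, t - z k ≠ 0) :
    HasDerivAt (fun s => s + lam * (∑ L, if L ≠ J then (s - w L)⁻¹ else 0)
        - lam * ∑ k, (s - z k)⁻¹)
      (1 + lam * (∑ L, if L ≠ J then -(((t - w L)^2)⁻¹) else 0)
        - lam * ∑ k, -(((t - z k)^2)⁻¹)) t := by
  have d1 : HasDerivAt (fun s : ℝ => s) 1 t := hasDerivAt_id t
  have d2 : HasDerivAt (fun s => ∑ L, if L ≠ J then (s - w L)⁻¹ else 0)
      (∑ L, if L ≠ J then -(((t - w L)^2)⁻¹) else 0) t := by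
    refine HasDerivAt.fun_sum fun L _ => ?_
    rcases eq_or_ne L J with hL | hL
    · have hfun : (fun s : ℝ => if L ≠ J then (s - w L)⁻¹ else 0) = (fun _ => (0:ℝ)) := by
        funext s; rw [if_neg (by simp [hL])]
      rw [if_neg (by simp [hL]), hfun]
      exact hasDerivAt_const t _
    · have := ((hasDerivAt_id t).sub_const (w L)).inv (ha L hL)
      have hfun : (fun s : ℝ => if L ≠ J then (s - w L)⁻¹ else 0)
          = (fun s : ℝ => (s - w L)⁻¹) := by
        funext s; rw [if_pos hL]
      rw [if_pos hL, hfun]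
      refine this.congr_deriv ?_
      simp only [Pi.sub_apply, id]
      field_simp
  have d3 : HasDerivAt (fun s => ∑ k, (s - z k)⁻¹) (∑ k, -(((t - z k)^2)⁻¹)) t := by
    refine HasDerivAt.fun_sum fun k _ => ?_
    have := ((hasDerivAt_id t).sub_const (z k)).inv (hb k)
    refine this.congr_deriv ?_
    simp only [Pi.sub_apply, id]
    field_simp
  exact (d1.add (d2.const_mul lam)).sub (d3.const_mul lam)
lemma hasDerivAt_LL_x (N M : ℕ) (lam : ℝ) (x : Fin N → ℝ) (y : Fin M → ℝ) (j : Fin N) (t : ℝ)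
    (ha : ∀ k, k < j → x k < t) (hb : ∀ l, j < l → t < x l) (hc : ∀ K, t < y K) :
    HasDerivAt (fun s => LL N M lam (Function.update x j s) y)
      (-t + lam * (∑ k, if k ≠ j then (t - x k)⁻¹ else 0) + lam * ∑ K, (y K - t)⁻¹) t := by
  have d1 : HasDerivAt (fun s => ∑ k, -(Function.update x j s k)^2/2) (-t) t := by
    have h := (hasDerivAt_sumsq N x j t).neg
    have heq : (fun s => ∑ k, -(Function.update x j s k)^2/2)
        = (fun s => -(∑ k, (Function.update x j s k)^2/2)) := by
      funext s
      rw [← Finset.sum_neg_distrib]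
      exact Finset.sum_congr rfl fun k _ => neg_div _ _
    rw [heq]; exact h
  have d2 : HasDerivAt (fun _ : ℝ => ∑ J, (y J)^2/2) 0 t := hasDerivAt_const t _
  have d3 := hasDerivAt_pairlog N x j lam t ha hb
  have d4 : HasDerivAt (fun _ : ℝ => ∑ J, ∑ K, if J < K then lam * Real.log (y K - y J) else 0)
      0 t := hasDerivAt_const t _
  have d5 := hasDerivAt_mixedx N M x y j lam t (fun K => ne_of_gt (sub_pos.2 (hc K)))
  have hcomb := (((d1.add d2).add d3).add d4).sub d5
  unfold LL
  refine hcomb.congr_deriv ?_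
  ring

lemma hasDerivAt_LL_y (N M : ℕ) (lam : ℝ) (x : Fin N → ℝ) (y : Fin M → ℝ) (J : Fin M) (t : ℝ)
    (ha : ∀ L, L < J → y L < t) (hb : ∀ L, J < L → t < y L) (hc : ∀ k, x k < t) :
    HasDerivAt (fun s => LL N M lam x (Function.update y J s))
      (t + lam * (∑ L, if L ≠ J then (t - y L)⁻¹ else 0) - lam * ∑ k, (t - x k)⁻¹) t := by
  have d1 : HasDerivAt (fun _ : ℝ => ∑ j, -(x j)^2/2) 0 t := hasDerivAt_const t _
  have d2 := hasDerivAt_sumsq M y J t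
  have d3 : HasDerivAt (fun _ : ℝ => ∑ j, ∑ k, if j < k then lam * Real.log (x k - x j) else 0)
      0 t := hasDerivAt_const t _
  have d4 := hasDerivAt_pairlog M y J lam t ha hb
  have d5 := hasDerivAt_mixedy N M x y J lam t (fun k => ne_of_gt (sub_pos.2 (hc k)))
  have hcomb := (((d1.add d2).add d3).add d4).sub d5
  unfold LL
  refine hcomb.congr_deriv ?_
  ring

lemma isOpen_domx (N M : ℕ) (y : Fin M → ℝ) :
    IsOpen {x' : Fin N → ℝ | (∀ j k : Fin N, j < k → x' j < x' k)
      ∧ ∀ (i : Fin N) (K : Fin M), x' i < y K} := by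
  have h1 : IsOpen {x' : Fin N → ℝ | ∀ j k : Fin N, j < k → x' j < x' k} := by
    have he : {x' : Fin N → ℝ | ∀ j k : Fin N, j < k → x' j < x' k}
        = ⋂ (j : Fin N), ⋂ (k : Fin N), {x' | j < k → x' j < x' k} := by
      ext x'; simp [Set.mem_iInter]
    rw [he]
    refine isOpen_iInter_of_finite fun j => isOpen_iInter_of_finite fun k => ?_
    by_cases h : j < k
    · have he2 : {x' : Fin N → ℝ | j < k → x' j < x' k} = {x' | x' j < x' k} := by
        ext x'; simp [h]
      rw [he2]
      exact isOpen_lt (continuous_apply j) (continuous_apply k)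
    · have he2 : {x' : Fin N → ℝ | j < k → x' j < x' k} = Set.univ := by
        ext x'; simp [h]
      rw [he2]; exact isOpen_univ
  have h2 : IsOpen {x' : Fin N → ℝ | ∀ (i : Fin N) (K : Fin M), x' i < y K} := by
    have he : {x' : Fin N → ℝ | ∀ (i : Fin N) (K : Fin M), x' i < y K}
        = ⋂ (i : Fin N), ⋂ (K : Fin M), {x' | x' i < y K} := by
      ext x'; simp [Set.mem_iInter]
    rw [he]
    exact isOpen_iInter_of_finite fun i => isOpen_iInter_of_finite fun K =>
      isOpen_lt (continuous_apply i) continuous_const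
  have he : {x' : Fin N → ℝ | (∀ j k : Fin N, j < k → x' j < x' k)
      ∧ ∀ (i : Fin N) (K : Fin M), x' i < y K}
      = {x' : Fin N → ℝ | ∀ j k : Fin N, j < k → x' j < x' k}
        ∩ {x' : Fin N → ℝ | ∀ (i : Fin N) (K : Fin M), x' i < y K} := rfl
  rw [he]; exact h1.inter h2

lemma isOpen_domy (N M : ℕ) (x : Fin N → ℝ) :
    IsOpen {y' : Fin M → ℝ | (∀ J K : Fin M, J < K → y' J < y' K)
      ∧ ∀ (i : Fin N) (K : Fin M), x i < y' K} := by
  have h1 : IsOpen {y' : Fin M → ℝ | ∀ J K : Fin M, J < K → y' J < y' K} := by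
    have he : {y' : Fin M → ℝ | ∀ J K : Fin M, J < K → y' J < y' K}
        = ⋂ (J : Fin M), ⋂ (K : Fin M), {y' | J < K → y' J < y' K} := by
      ext y'; simp [Set.mem_iInter]
    rw [he]
    refine isOpen_iInter_of_finite fun J => isOpen_iInter_of_finite fun K => ?_
    by_cases h : J < K
    · have he2 : {y' : Fin M → ℝ | J < K → y' J < y' K} = {y' | y' J < y' K} := by
        ext y'; simp [h]
      rw [he2]
      exact isOpen_lt (continuous_apply J) (continuous_apply K)
    · have he2 : {y' : Fin M → ℝ | J < K → y' J < y' K} = Set.univ := by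
        ext y'; simp [h]
      rw [he2]; exact isOpen_univ
  have h2 : IsOpen {y' : Fin M → ℝ | ∀ (i : Fin N) (K : Fin M), x i < y' K} := by
    have he : {y' : Fin M → ℝ | ∀ (i : Fin N) (K : Fin M), x i < y' K}
        = ⋂ (i : Fin N), ⋂ (K : Fin M), {y' | x i < y' K} := by
      ext y'; simp [Set.mem_iInter]
    rw [he]
    exact isOpen_iInter_of_finite fun i => isOpen_iInter_of_finite fun K =>
      isOpen_lt continuous_const (continuous_apply K)
  exact h1.inter h2
lemma pd2_x (N M : ℕ) (lam : ℝ) (x : Fin N → ℝ) (y : Fin M → ℝ) (j : Fin N)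
    (hx : ∀ j k : Fin N, j < k → x j < x k) (hy : ∀ J K : Fin M, J < K → y J < y K)
    (hxy : ∀ (i : Fin N) (K : Fin M), x i < y K) :
    pd j (pd j (fun x' => FNM N M lam x' y)) x =
      ((-1 - lam * (∑ k, if k ≠ j then ((x j - x k)^2)⁻¹ else 0)
          + lam * ∑ K, ((y K - x j)^2)⁻¹)
        + (-(x j) + lam * (∑ k, if k ≠ j then (x j - x k)⁻¹ else 0)
          + lam * ∑ K, (y K - x j)⁻¹)^2) * FNM N M lam x y := by
  set U : Set ℝ := {t | (∀ a b : Fin N, a < b → Function.update x j t a < Function.update x j t b)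
      ∧ ∀ (i : Fin N) (K : Fin M), Function.update x j t i < y K} with hU
  have hUopen : IsOpen U := by
    have hc : Continuous fun t : ℝ => Function.update x j t :=
      continuous_const.update j continuous_id
    exact (isOpen_domx N M y).preimage hc
  have hmemU : x j ∈ U := by
    rw [hU]
    simp only [Set.mem_setOf_eq, Function.update_eq_self]
    exact ⟨hx, hxy⟩
  have hcond : ∀ t ∈ U, (∀ k, k < j → x k < t) ∧ (∀ l, j < l → t < x l) ∧ (∀ K, t < y K) := by
    intro t ht
    refine ⟨fun k hk => ?_, fun l hl => ?_, fun K => ?_⟩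
    · have := ht.1 k j hk
      rwa [Function.update_of_ne (ne_of_lt hk), Function.update_self] at this
    · have := ht.1 j l hl
      rwa [Function.update_of_ne (ne_of_gt hl), Function.update_self] at this
    · have := ht.2 j K
      rwa [Function.update_self] at this
  have hdF : ∀ t ∈ U, HasDerivAt (fun s => FNM N M lam (Function.update x j s) y)
      (FNM N M lam (Function.update x j t) y
        * (-t + lam * (∑ k, if k ≠ j then (t - x k)⁻¹ else 0) + lam * ∑ K, (y K - t)⁻¹)) t := by
    intro t ht
    obtain ⟨ha, hb, hc⟩ := hcond t ht
    have hΦ := hasDerivAt_LL_x N M lam x y j t ha hb hc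
    have hexp := hΦ.exp
    have hFe : ∀ s ∈ U, FNM N M lam (Function.update x j s) y
        = Real.exp (LL N M lam (Function.update x j s) y) := by
      intro s hs
      exact FNM_exp N M lam (Function.update x j s) y hs.1 hy hs.2
    have hev : (fun s => FNM N M lam (Function.update x j s) y)
        =ᶠ[nhds t] (fun s => Real.exp (LL N M lam (Function.update x j s) y)) :=
      Filter.eventuallyEq_of_mem (hUopen.mem_nhds ht) (fun s hs => hFe s hs)
    have hd := hexp.congr_of_eventuallyEq hev
    rwa [← hFe t ht] at hd
  have hpd1 : ∀ t ∈ U, pd j (fun x' => FNM N M lam x' y) (Function.update x j t)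
      = FNM N M lam (Function.update x j t) y
        * (-t + lam * (∑ k, if k ≠ j then (t - x k)⁻¹ else 0) + lam * ∑ K, (y K - t)⁻¹) := by
    intro t ht
    show deriv (fun s => FNM N M lam
        (Function.update (Function.update x j t) j s) y) (Function.update x j t j) = _
    simp only [Function.update_idem, Function.update_self]
    exact (hdF t ht).deriv
  have hev2 : (fun t => pd j (fun x' => FNM N M lam x' y) (Function.update x j t))
      =ᶠ[nhds (x j)] (fun t => FNM N M lam (Function.update x j t) y
        * (-t + lam * (∑ k, if k ≠ j then (t - x k)⁻¹ else 0) + lam * ∑ K, (y K - t)⁻¹)) :=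
    Filter.eventuallyEq_of_mem (hUopen.mem_nhds hmemU) (fun t ht => hpd1 t ht)
  show deriv (fun t => pd j (fun x' => FNM N M lam x' y) (Function.update x j t)) (x j) = _
  rw [hev2.deriv_eq]
  obtain ⟨ha, hb, hc⟩ := hcond (x j) hmemU
  have hF0 : HasDerivAt (fun t => FNM N M lam (Function.update x j t) y)
      (FNM N M lam x y
        * (-(x j) + lam * (∑ k, if k ≠ j then (x j - x k)⁻¹ else 0)
          + lam * ∑ K, (y K - x j)⁻¹)) (x j) := by
    have := hdF (x j) hmemU
    rwa [Function.update_eq_self] at this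
  have hg0 := hasDerivAt_gx N M x y j lam (x j)
    (fun k hk => by
      rcases lt_trichotomy k j with h | h | h
      · exact ne_of_gt (sub_pos.2 (ha k h))
      · exact absurd h hk
      · exact ne_of_lt (sub_neg.2 (hb k h)))
    (fun K => ne_of_gt (sub_pos.2 (hc K)))
  have hprod := hF0.fun_mul hg0
  rw [hprod.deriv]
  rw [Function.update_eq_self]
  have hneg : (∑ k, if k ≠ j then -(((x j - x k)^2)⁻¹) else 0)
      = -∑ k, (if k ≠ j then ((x j - x k)^2)⁻¹ else 0) := by
    rw [← Finset.sum_neg_distrib]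
    refine Finset.sum_congr rfl fun k _ => ?_
    rcases eq_or_ne k j with h | h <;> simp [h]
  rw [hneg]
  ring
lemma pd2_y (N M : ℕ) (lam : ℝ) (x : Fin N → ℝ) (y : Fin M → ℝ) (J : Fin M)
    (hx : ∀ j k : Fin N, j < k → x j < x k) (hy : ∀ J K : Fin M, J < K → y J < y K)
    (hxy : ∀ (i : Fin N) (K : Fin M), x i < y K) :
    pd J (pd J (fun y' => FNM N M lam x y')) y =
      ((1 - lam * (∑ L, if L ≠ J then ((y J - y L)^2)⁻¹ else 0)
          + lam * ∑ k, ((y J - x k)^2)⁻¹)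
        + (y J + lam * (∑ L, if L ≠ J then (y J - y L)⁻¹ else 0)
          - lam * ∑ k, (y J - x k)⁻¹)^2) * FNM N M lam x y := by
  set U : Set ℝ := {t | (∀ a b : Fin M, a < b → Function.update y J t a < Function.update y J t b)
      ∧ ∀ (i : Fin N) (K : Fin M), x i < Function.update y J t K} with hU
  have hUopen : IsOpen U := by
    have hc : Continuous fun t : ℝ => Function.update y J t :=
      continuous_const.update J continuous_id
    exact (isOpen_domy N M x).preimage hc
  have hmemU : y J ∈ U := by
    rw [hU]
    simp only [Set.mem_setOf_eq, Function.update_eq_self]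
    exact ⟨hy, hxy⟩
  have hcond : ∀ t ∈ U, (∀ L, L < J → y L < t) ∧ (∀ L, J < L → t < y L) ∧ (∀ k, x k < t) := by
    intro t ht
    refine ⟨fun L hL => ?_, fun L hL => ?_, fun k => ?_⟩
    · have := ht.1 L J hL
      rwa [Function.update_of_ne (ne_of_lt hL), Function.update_self] at this
    · have := ht.1 J L hL
      rwa [Function.update_of_ne (ne_of_gt hL), Function.update_self] at this
    · have := ht.2 k J
      rwa [Function.update_self] at this
  have hdF : ∀ t ∈ U, HasDerivAt (fun s => FNM N M lam x (Function.update y J s))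
      (FNM N M lam x (Function.update y J t)
        * (t + lam * (∑ L, if L ≠ J then (t - y L)⁻¹ else 0) - lam * ∑ k, (t - x k)⁻¹)) t := by
    intro t ht
    obtain ⟨ha, hb, hc⟩ := hcond t ht
    have hΦ := hasDerivAt_LL_y N M lam x y J t ha hb hc
    have hexp := hΦ.exp
    have hFe : ∀ s ∈ U, FNM N M lam x (Function.update y J s)
        = Real.exp (LL N M lam x (Function.update y J s)) := by
      intro s hs
      exact FNM_exp N M lam x (Function.update y J s) hx hs.1 hs.2
    have hev : (fun s => FNM N M lam x (Function.update y J s))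
        =ᶠ[nhds t] (fun s => Real.exp (LL N M lam x (Function.update y J s))) :=
      Filter.eventuallyEq_of_mem (hUopen.mem_nhds ht) (fun s hs => hFe s hs)
    have hd := hexp.congr_of_eventuallyEq hev
    rwa [← hFe t ht] at hd
  have hpd1 : ∀ t ∈ U, pd J (fun y' => FNM N M lam x y') (Function.update y J t)
      = FNM N M lam x (Function.update y J t)
        * (t + lam * (∑ L, if L ≠ J then (t - y L)⁻¹ else 0) - lam * ∑ k, (t - x k)⁻¹) := by
    intro t ht
    show deriv (fun s => FNM N M lam x
        (Function.update (Function.update y J t) J s)) (Function.update y J t J) = _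
    simp only [Function.update_idem, Function.update_self]
    exact (hdF t ht).deriv
  have hev2 : (fun t => pd J (fun y' => FNM N M lam x y') (Function.update y J t))
      =ᶠ[nhds (y J)] (fun t => FNM N M lam x (Function.update y J t)
        * (t + lam * (∑ L, if L ≠ J then (t - y L)⁻¹ else 0) - lam * ∑ k, (t - x k)⁻¹)) :=
    Filter.eventuallyEq_of_mem (hUopen.mem_nhds hmemU) (fun t ht => hpd1 t ht)
  show deriv (fun t => pd J (fun y' => FNM N M lam x y') (Function.update y J t)) (y J) = _
  rw [hev2.deriv_eq]
  obtain ⟨ha, hb, hc⟩ := hcond (y J) hmemU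
  have hF0 : HasDerivAt (fun t => FNM N M lam x (Function.update y J t))
      (FNM N M lam x y
        * (y J + lam * (∑ L, if L ≠ J then (y J - y L)⁻¹ else 0)
          - lam * ∑ k, (y J - x k)⁻¹)) (y J) := by
    have := hdF (y J) hmemU
    rwa [Function.update_eq_self] at this
  have hg0 := hasDerivAt_gy N M x y J lam (y J)
    (fun L hL => by
      rcases lt_trichotomy L J with h | h | h
      · exact ne_of_gt (sub_pos.2 (ha L h))
      · exact absurd h hL
      · exact ne_of_lt (sub_neg.2 (hb L h)))
    (fun k => ne_of_gt (sub_pos.2 (hc k)))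
  have hprod := hF0.fun_mul hg0
  rw [hprod.deriv]
  rw [Function.update_eq_self]
  have hneg : (∑ L, if L ≠ J then -(((y J - y L)^2)⁻¹) else 0)
      = -∑ L, (if L ≠ J then ((y J - y L)^2)⁻¹ else 0) := by
    rw [← Finset.sum_neg_distrib]
    refine Finset.sum_congr rfl fun L _ => ?_
    rcases eq_or_ne L J with h | h <;> simp [h]
  have hneg2 : (∑ k, -(((y J - x k)^2)⁻¹)) = -∑ k, ((y J - x k)^2)⁻¹ :=
    Finset.sum_neg_distrib _
  rw [hneg, hneg2]
  ring

section Alg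
variable {ι : Type*} {κ : Type*} [Fintype ι] [Fintype κ] [DecidableEq ι] [DecidableEq κ]

lemma sum_ite_ne_one (j : ι) : ∑ k, (if k ≠ j then (1:ℝ) else 0) = (Fintype.card ι : ℝ) - 1 := by
  have h1 : ∀ k : ι, (if k ≠ j then (1:ℝ) else 0) = 1 - (if k = j then (1:ℝ) else 0) := by
    intro k; rcases eq_or_ne k j with h | h <;> simp [h]
  rw [Finset.sum_congr rfl fun k _ => h1 k, Finset.sum_sub_distrib]
  simp [Finset.sum_ite_eq', Finset.card_univ]

lemma alg1 (x : ι → ℝ) (hx : ∀ j k, j ≠ k → x j ≠ x k) :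
    ∑ j, x j * (∑ k, if k ≠ j then (x j - x k)⁻¹ else 0)
      = (Fintype.card ι : ℝ) * ((Fintype.card ι : ℝ) - 1) / 2 := by
  set f : ι → ι → ℝ := fun j k => x j * (if k ≠ j then (x j - x k)⁻¹ else 0) with hf
  have hmul : ∀ j : ι, x j * (∑ k, if k ≠ j then (x j - x k)⁻¹ else 0) = ∑ k, f j k := by
    intro j; rw [Finset.mul_sum]
  rw [Finset.sum_congr rfl fun j _ => hmul j]
  have key : (2:ℝ) * ∑ j, ∑ k, f j k = (Fintype.card ι : ℝ) * ((Fintype.card ι : ℝ) - 1) := by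
    have hswap : ∑ j, ∑ k, f j k = ∑ j, ∑ k, f k j := Finset.sum_comm
    have h2 : (2:ℝ) * ∑ j, ∑ k, f j k = ∑ j, ∑ k, (f j k + f k j) := by
      simp only [Finset.sum_add_distrib]
      rw [two_mul]; nth_rewrite 2 [hswap]; rfl
    rw [h2]
    have hpt : ∀ j k : ι, f j k + f k j = if k ≠ j then (1:ℝ) else 0 := by
      intro j k
      rcases eq_or_ne k j with h | h
      · simp [hf, h]
      · have hne : x j - x k ≠ 0 := sub_ne_zero_of_ne (hx j k (Ne.symm h))
        have hne' : x k - x j ≠ 0 := sub_ne_zero_of_ne (hx k j h)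
        simp only [hf, if_pos h, if_pos (Ne.symm h), if_pos]
        field_simp
        ring
    rw [Finset.sum_congr rfl fun j _ => Finset.sum_congr rfl fun k _ => hpt j k]
    rw [Finset.sum_congr rfl fun j _ => sum_ite_ne_one j]
    rw [Finset.sum_const, Finset.card_univ, nsmul_eq_mul]
  linarith


/-- cyclic shift of a triple sum -/
lemma sum_cyc (f : ι → ι → ι → ℝ) :
    ∑ j, ∑ k, ∑ l, f j k l = ∑ j, ∑ k, ∑ l, f l j k := by
  rw [Finset.sum_comm]
  exact Finset.sum_congr rfl fun k _ => Finset.sum_comm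

lemma alg2 (x : ι → ℝ) (hx : ∀ j k, j ≠ k → x j ≠ x k) :
    ∑ j, (∑ k, if k ≠ j then (x j - x k)⁻¹ else 0)^2
      = ∑ j, ∑ k, (if k ≠ j then ((x j - x k)^2)⁻¹ else 0) := by
  set a : ι → ι → ℝ := fun j k => if k ≠ j then (x j - x k)⁻¹ else 0 with ha
  have hsq : ∀ j : ι, (∑ k, a j k)^2 = ∑ k, ∑ l, a j k * a j l := by
    intro j; rw [sq, Finset.sum_mul_sum]
  rw [Finset.sum_congr rfl fun j _ => hsq j]
  have hsplit : ∀ j k l : ι, a j k * a j l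
      = (if l = k then (if k ≠ j then ((x j - x k)^2)⁻¹ else 0) else 0)
        + (if l ≠ k then a j k * a j l else 0) := by
    intro j k l
    rcases eq_or_ne l k with h | h
    · subst h
      rcases eq_or_ne l j with h2 | h2 <;> simp [ha, h2, sq]
    · simp [h]
  have hC : ∑ j, ∑ k, ∑ l, (if l ≠ k then a j k * a j l else 0) = 0 := by
    set F : ι → ι → ι → ℝ := fun j k l => if l ≠ k then a j k * a j l else 0 with hF
    have hc1 : ∑ j, ∑ k, ∑ l, F j k l = ∑ j, ∑ k, ∑ l, F l j k := sum_cyc F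
    have hc2 : ∑ j, ∑ k, ∑ l, F j k l = ∑ j, ∑ k, ∑ l, F k l j := by
      rw [sum_cyc F, sum_cyc (fun j k l => F l j k)]
    have h3 : (3:ℝ) * ∑ j, ∑ k, ∑ l, F j k l
        = ∑ j, ∑ k, ∑ l, (F j k l + F l j k + F k l j) := by
      simp only [Finset.sum_add_distrib]
      rw [← hc1, ← hc2]; ring
    have hpt : ∀ j k l : ι, F j k l + F l j k + F k l j = 0 := by
      intro j k l
      rcases eq_or_ne l k with hlk | hlk
      · subst hlk; simp [hF, ha]
      rcases eq_or_ne k j with hkj | hkj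
      · subst hkj; simp [hF, ha, hlk]
      rcases eq_or_ne j l with hjl | hjl
      · subst hjl; simp [hF, ha, hlk, hkj]
      · have h1 : x j - x k ≠ 0 := sub_ne_zero_of_ne (hx j k (Ne.symm hkj))
        have h2 : x j - x l ≠ 0 := sub_ne_zero_of_ne (hx j l hjl)
        have h3 : x k - x l ≠ 0 := sub_ne_zero_of_ne (hx k l (fun h => hlk h.symm))
        have h4 : x l - x j ≠ 0 := sub_ne_zero_of_ne (hx l j (Ne.symm hjl))
        have h5 : x l - x k ≠ 0 := sub_ne_zero_of_ne (hx l k hlk)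
        have h6 : x k - x j ≠ 0 := sub_ne_zero_of_ne (hx k j hkj)
        simp only [hF, ha, if_pos hlk, if_pos hkj, if_pos hjl, if_pos (Ne.symm hlk),
          if_pos (Ne.symm hkj), if_pos (Ne.symm hjl)]
        field_simp
        ring
    have := h3
    rw [Finset.sum_congr rfl fun j _ => Finset.sum_congr rfl fun k _ =>
      Finset.sum_congr rfl fun l _ => hpt j k l] at this
    simp only [Finset.sum_const_zero] at this
    linarith
  calc ∑ j, ∑ k, ∑ l, a j k * a j l
      = ∑ j, ∑ k, ((if k ≠ j then ((x j - x k)^2)⁻¹ else 0)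
          + ∑ l, (if l ≠ k then a j k * a j l else 0)) := by
        refine Finset.sum_congr rfl fun j _ => Finset.sum_congr rfl fun k _ => ?_
        rw [Finset.sum_congr rfl fun l _ => hsplit j k l, Finset.sum_add_distrib,
          Finset.sum_ite_eq' Finset.univ k]
        simp
    _ = ∑ j, ∑ k, (if k ≠ j then ((x j - x k)^2)⁻¹ else 0) := by
        rw [Finset.sum_congr rfl fun j (_ : j ∈ Finset.univ) => Finset.sum_add_distrib]
        rw [Finset.sum_add_distrib, hC, add_zero]


lemma sum_ite_ne (j : ι) (c : ι → ℝ) :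
    ∑ k, (if k ≠ j then c k else 0) = (∑ k, c k) - c j := by
  have h1 : ∀ k : ι, (if k ≠ j then c k else 0) = c k - (if k = j then c k else 0) := by
    intro k; rcases eq_or_ne k j with h | h <;> simp [h]
  rw [Finset.sum_congr rfl fun k _ => h1 k, Finset.sum_sub_distrib, Finset.sum_ite_eq' Finset.univ j c]
  simp

lemma alg3 (x : ι → ℝ) (y : κ → ℝ) (hx : ∀ j k, j ≠ k → x j ≠ x k)
    (hxy : ∀ j K, x j ≠ y K) :
    2 * ∑ j, ((∑ k, if k ≠ j then (x j - x k)⁻¹ else 0) * (∑ K, (y K - x j)⁻¹))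
      = (∑ j, ∑ K, ∑ k, (y K - x j)⁻¹ * (y K - x k)⁻¹)
        - ∑ j, ∑ K, ((y K - x j)^2)⁻¹ := by
  set a : ι → ι → ℝ := fun j k => if k ≠ j then (x j - x k)⁻¹ else 0 with ha
  set b : ι → κ → ℝ := fun j K => (y K - x j)⁻¹ with hb
  have h1 : ∀ j : ι, (∑ k, a j k) * (∑ K, b j K) = ∑ k, ∑ K, a j k * b j K := fun j =>
    Finset.sum_mul_sum _ _ _ _
  rw [Finset.sum_congr rfl fun j _ => h1 j]
  have hswap : ∑ j, ∑ k, ∑ K, a j k * b j K = ∑ j, ∑ k, ∑ K, a k j * b k K :=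
    Finset.sum_comm
  have h2 : 2 * ∑ j, ∑ k, ∑ K, a j k * b j K
      = ∑ j, ∑ k, ∑ K, (a j k * b j K + a k j * b k K) := by
    simp only [Finset.sum_add_distrib]
    rw [two_mul]; nth_rewrite 2 [hswap]; rfl
  rw [h2]
  have hpt : ∀ j k K, a j k * b j K + a k j * b k K
      = if k ≠ j then b j K * b k K else 0 := by
    intro j k K
    rcases eq_or_ne k j with h | h
    · simp [ha, h]
    · have h1' : x j - x k ≠ 0 := sub_ne_zero_of_ne (hx j k (Ne.symm h))
      have h2' : x k - x j ≠ 0 := sub_ne_zero_of_ne (hx k j h)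
      have h3' : y K - x j ≠ 0 := sub_ne_zero_of_ne (Ne.symm (hxy j K))
      have h4' : y K - x k ≠ 0 := sub_ne_zero_of_ne (Ne.symm (hxy k K))
      simp only [ha, hb, if_pos h, if_pos (Ne.symm h)]
      field_simp
      ring
  rw [Finset.sum_congr rfl fun j _ => Finset.sum_congr rfl fun k _ =>
    Finset.sum_congr rfl fun K _ => hpt j k K]
  have hinner : ∀ j : ι, ∑ k, ∑ K, (if k ≠ j then b j K * b k K else 0)
      = ∑ K, ((∑ k, b j K * b k K) - b j K * b j K) := by
    intro j
    rw [Finset.sum_comm]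
    exact Finset.sum_congr rfl fun K _ => sum_ite_ne j _
  rw [Finset.sum_congr rfl fun j _ => hinner j]
  simp only [Finset.sum_sub_distrib]
  congr 1
  refine Finset.sum_congr rfl fun j _ => Finset.sum_congr rfl fun K _ => ?_
  rw [hb, ← mul_inv, ← sq]

lemma alg4 (x : ι → ℝ) (y : κ → ℝ) (hy : ∀ J K, J ≠ K → y J ≠ y K)
    (hxy : ∀ j K, x j ≠ y K) :
    2 * ∑ K, ((∑ L, if L ≠ K then (y K - y L)⁻¹ else 0) * (∑ j, (y K - x j)⁻¹))
      = (∑ K, ∑ j, ((y K - x j)^2)⁻¹)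
        - ∑ K, ∑ j, ∑ L, (y K - x j)⁻¹ * (y L - x j)⁻¹ := by
  set c : κ → κ → ℝ := fun K L => if L ≠ K then (y K - y L)⁻¹ else 0 with hc
  set d : κ → ι → ℝ := fun K j => (y K - x j)⁻¹ with hd
  have h1 : ∀ K : κ, (∑ L, c K L) * (∑ j, d K j) = ∑ L, ∑ j, c K L * d K j := fun K =>
    Finset.sum_mul_sum _ _ _ _
  rw [Finset.sum_congr rfl fun K _ => h1 K]
  have hswap : ∑ K, ∑ L, ∑ j, c K L * d K j = ∑ K, ∑ L, ∑ j, c L K * d L j :=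
    Finset.sum_comm
  have h2 : 2 * ∑ K, ∑ L, ∑ j, c K L * d K j
      = ∑ K, ∑ L, ∑ j, (c K L * d K j + c L K * d L j) := by
    simp only [Finset.sum_add_distrib]
    rw [two_mul]; nth_rewrite 2 [hswap]; rfl
  rw [h2]
  have hpt : ∀ K L j, c K L * d K j + c L K * d L j
      = -(if L ≠ K then d K j * d L j else 0) := by
    intro K L j
    rcases eq_or_ne L K with h | h
    · simp [hc, h]
    · have h1' : y K - y L ≠ 0 := sub_ne_zero_of_ne (hy K L (Ne.symm h))
      have h2' : y L - y K ≠ 0 := sub_ne_zero_of_ne (hy L K h)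
      have h3' : y K - x j ≠ 0 := sub_ne_zero_of_ne (Ne.symm (hxy j K))
      have h4' : y L - x j ≠ 0 := sub_ne_zero_of_ne (Ne.symm (hxy j L))
      simp only [hc, hd, if_pos h, if_pos (Ne.symm h)]
      field_simp
      ring
  rw [Finset.sum_congr rfl fun K _ => Finset.sum_congr rfl fun L _ =>
    Finset.sum_congr rfl fun j _ => hpt K L j]
  have hinner : ∀ K : κ, ∑ L, ∑ j, -(if L ≠ K then d K j * d L j else 0)
      = -(∑ j, ((∑ L, d K j * d L j) - d K j * d K j)) := by
    intro K
    simp only [Finset.sum_neg_distrib]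
    rw [Finset.sum_comm]
    congr 1
    exact Finset.sum_congr rfl fun j _ => sum_ite_ne K _
  rw [Finset.sum_congr rfl fun K _ => hinner K]
  simp only [Finset.sum_neg_distrib, Finset.sum_sub_distrib]
  have : ∀ K j, d K j * d K j = ((y K - x j)^2)⁻¹ := by
    intro K j; rw [hd, ← mul_inv, ← sq]
  rw [Finset.sum_congr rfl fun K (_ : K ∈ Finset.univ) =>
    Finset.sum_congr rfl fun j _ => this K j]
  ring

lemma alg5 (x : ι → ℝ) (y : κ → ℝ) (hxy : ∀ j K, x j ≠ y K) :
    (∑ j, x j * ∑ K, (y K - x j)⁻¹) - (∑ K, y K * ∑ j, (y K - x j)⁻¹)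
      = -((Fintype.card ι : ℝ) * (Fintype.card κ : ℝ)) := by
  have h1 : (∑ j, x j * ∑ K, (y K - x j)⁻¹) = ∑ j, ∑ K, x j * (y K - x j)⁻¹ := by
    exact Finset.sum_congr rfl fun j _ => Finset.mul_sum _ _ _
  have h2 : (∑ K, y K * ∑ j, (y K - x j)⁻¹) = ∑ j, ∑ K, y K * (y K - x j)⁻¹ := by
    rw [Finset.sum_comm]
    exact Finset.sum_congr rfl fun K _ => Finset.mul_sum _ _ _
  rw [h1, h2, ← Finset.sum_sub_distrib]
  have : ∀ j : ι, ∑ K, (x j * (y K - x j)⁻¹) - ∑ K, (y K * (y K - x j)⁻¹)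
      = ∑ _K : κ, (-1 : ℝ) := by
    intro j
    rw [← Finset.sum_sub_distrib]
    refine Finset.sum_congr rfl fun K _ => ?_
    have h3 : y K - x j ≠ 0 := sub_ne_zero_of_ne (Ne.symm (hxy j K))
    field_simp
    ring
  rw [Finset.sum_congr rfl fun j _ => this j]
  simp [Finset.card_univ, mul_comm]

lemma alg8 [LinearOrder ι] (x : ι → ℝ) :
    2 * (∑ j, ∑ k, if j < k then ((x j - x k)^2)⁻¹ else 0)
      = ∑ j, ∑ k, (if k ≠ j then ((x j - x k)^2)⁻¹ else 0) := by
  have hsym : ∀ j k : ι, ((x k - x j)^2)⁻¹ = ((x j - x k)^2)⁻¹ := by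
    intro j k; rw [show x k - x j = -(x j - x k) by ring, neg_sq]
  have hpt : ∀ j k : ι, (if k ≠ j then ((x j - x k)^2)⁻¹ else 0)
      = (if j < k then ((x j - x k)^2)⁻¹ else 0) + (if k < j then ((x j - x k)^2)⁻¹ else 0) := by
    intro j k
    rcases lt_trichotomy j k with h | h | h
    · simp [h, not_lt_of_gt h, ne_of_gt h]
    · simp [h, lt_irrefl]
    · simp [h, not_lt_of_gt h, (ne_of_lt h)]
  rw [Finset.sum_congr rfl fun j (_ : j ∈ Finset.univ) => Finset.sum_congr rfl fun k _ => hpt j k]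
  simp only [Finset.sum_add_distrib]
  have : ∑ j, ∑ k, (if k < j then ((x j - x k)^2)⁻¹ else 0)
      = ∑ j, ∑ k, (if j < k then ((x j - x k)^2)⁻¹ else 0) := by
    rw [Finset.sum_comm]
    exact Finset.sum_congr rfl fun k _ => Finset.sum_congr rfl fun j _ => by
      rcases lt_or_ge k j with h | h
      · rw [if_pos h, if_pos h, hsym]
      · rw [if_neg (not_lt_of_ge h), if_neg (not_lt_of_ge h)]
  rw [this]; ring

lemma key_alg (N M : ℕ) (lam : ℝ) (x : Fin N → ℝ) (y : Fin M → ℝ)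
    (hx : ∀ j k : Fin N, j ≠ k → x j ≠ x k) (hy : ∀ J K : Fin M, J ≠ K → y J ≠ y K)
    (hxy : ∀ (j : Fin N) (K : Fin M), x j ≠ y K) :
    (∑ j, ((x j)^2
        - (-1 - lam * (∑ k, if k ≠ j then ((x j - x k)^2)⁻¹ else 0)
            + lam * ∑ K, ((y K - x j)^2)⁻¹)
        - (-(x j) + lam * (∑ k, if k ≠ j then (x j - x k)⁻¹ else 0)
            + lam * ∑ K, (y K - x j)⁻¹)^2))
      + 2*lam*(lam-1) * (∑ j, ∑ k, if j < k then ((x j - x k)^2)⁻¹ else 0)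
    = (∑ K, ((y K)^2
        - (1 - lam * (∑ L, if L ≠ K then ((y K - y L)^2)⁻¹ else 0)
            + lam * ∑ j, ((y K - x j)^2)⁻¹)
        - (y K + lam * (∑ L, if L ≠ K then (y K - y L)⁻¹ else 0)
            - lam * ∑ j, (y K - x j)⁻¹)^2))
      + 2*lam*(lam-1) * (∑ J, ∑ K, if J < K then ((y J - y K)^2)⁻¹ else 0)
      + (lam * ((N:ℝ) - (M:ℝ))^2 + ((N:ℝ) + (M:ℝ)) * (1 - lam)) := by
  have hL : (∑ j, ((x j)^2
        - (-1 - lam * (∑ k, if k ≠ j then ((x j - x k)^2)⁻¹ else 0)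
            + lam * ∑ K, ((y K - x j)^2)⁻¹)
        - (-(x j) + lam * (∑ k, if k ≠ j then (x j - x k)⁻¹ else 0)
            + lam * ∑ K, (y K - x j)⁻¹)^2))
      = (N:ℝ)
        + 2*lam * (∑ j, x j * (∑ k, if k ≠ j then (x j - x k)⁻¹ else 0))
        + 2*lam * (∑ j, x j * (∑ K, (y K - x j)⁻¹))
        + lam * (∑ j, ∑ k, if k ≠ j then ((x j - x k)^2)⁻¹ else 0)
        - lam * (∑ j, ∑ K, ((y K - x j)^2)⁻¹)
        - lam^2 * (∑ j, (∑ k, if k ≠ j then (x j - x k)⁻¹ else 0)^2)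
        - 2*lam^2 * (∑ j, ((∑ k, if k ≠ j then (x j - x k)⁻¹ else 0) * (∑ K, (y K - x j)⁻¹)))
        - lam^2 * (∑ j, (∑ K, (y K - x j)⁻¹)^2) := by
    have hpt : ∀ j : Fin N, (x j)^2
        - (-1 - lam * (∑ k, if k ≠ j then ((x j - x k)^2)⁻¹ else 0)
            + lam * ∑ K, ((y K - x j)^2)⁻¹)
        - (-(x j) + lam * (∑ k, if k ≠ j then (x j - x k)⁻¹ else 0)
            + lam * ∑ K, (y K - x j)⁻¹)^2
      = 1 + 2*lam * (x j * (∑ k, if k ≠ j then (x j - x k)⁻¹ else 0))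
          + 2*lam * (x j * (∑ K, (y K - x j)⁻¹))
          + lam * (∑ k, if k ≠ j then ((x j - x k)^2)⁻¹ else 0)
          - lam * (∑ K, ((y K - x j)^2)⁻¹)
          - lam^2 * ((∑ k, if k ≠ j then (x j - x k)⁻¹ else 0)^2)
          - 2*lam^2 * ((∑ k, if k ≠ j then (x j - x k)⁻¹ else 0) * (∑ K, (y K - x j)⁻¹))
          - lam^2 * ((∑ K, (y K - x j)⁻¹)^2) := fun j => by ring
    rw [Finset.sum_congr rfl fun j _ => hpt j]
    simp only [Finset.sum_add_distrib, Finset.sum_sub_distrib, ← Finset.mul_sum,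
      Finset.sum_const, Finset.card_univ, Fintype.card_fin, nsmul_eq_mul, mul_one]
  have hR : (∑ K, ((y K)^2
        - (1 - lam * (∑ L, if L ≠ K then ((y K - y L)^2)⁻¹ else 0)
            + lam * ∑ j, ((y K - x j)^2)⁻¹)
        - (y K + lam * (∑ L, if L ≠ K then (y K - y L)⁻¹ else 0)
            - lam * ∑ j, (y K - x j)⁻¹)^2))
      = -(M:ℝ)
        - 2*lam * (∑ K, y K * (∑ L, if L ≠ K then (y K - y L)⁻¹ else 0))
        + 2*lam * (∑ K, y K * (∑ j, (y K - x j)⁻¹))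
        + lam * (∑ K, ∑ L, if L ≠ K then ((y K - y L)^2)⁻¹ else 0)
        - lam * (∑ K, ∑ j, ((y K - x j)^2)⁻¹)
        - lam^2 * (∑ K, (∑ L, if L ≠ K then (y K - y L)⁻¹ else 0)^2)
        + 2*lam^2 * (∑ K, ((∑ L, if L ≠ K then (y K - y L)⁻¹ else 0) * (∑ j, (y K - x j)⁻¹)))
        - lam^2 * (∑ K, (∑ j, (y K - x j)⁻¹)^2) := by
    have hpt : ∀ K : Fin M, (y K)^2
        - (1 - lam * (∑ L, if L ≠ K then ((y K - y L)^2)⁻¹ else 0)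
            + lam * ∑ j, ((y K - x j)^2)⁻¹)
        - (y K + lam * (∑ L, if L ≠ K then (y K - y L)⁻¹ else 0)
            - lam * ∑ j, (y K - x j)⁻¹)^2
      = -1 - 2*lam * (y K * (∑ L, if L ≠ K then (y K - y L)⁻¹ else 0))
          + 2*lam * (y K * (∑ j, (y K - x j)⁻¹))
          + lam * (∑ L, if L ≠ K then ((y K - y L)^2)⁻¹ else 0)
          - lam * (∑ j, ((y K - x j)^2)⁻¹)
          - lam^2 * ((∑ L, if L ≠ K then (y K - y L)⁻¹ else 0)^2)
          + 2*lam^2 * ((∑ L, if L ≠ K then (y K - y L)⁻¹ else 0) * (∑ j, (y K - x j)⁻¹))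
          - lam^2 * ((∑ j, (y K - x j)⁻¹)^2) := fun K => by ring
    rw [Finset.sum_congr rfl fun K _ => hpt K]
    simp only [Finset.sum_add_distrib, Finset.sum_sub_distrib, ← Finset.mul_sum,
      Finset.sum_const, Finset.card_univ, Fintype.card_fin, nsmul_eq_mul, mul_one]
    ring
  have f1 := alg1 x hx
  have f1' := alg1 y hy
  rw [Fintype.card_fin] at f1 f1'
  have f2 := alg2 x hx
  have f2' := alg2 y hy
  have f3 := alg3 x y hx hxy
  have f4 := alg4 x y hy hxy
  have f5 := alg5 x y hxy
  rw [Fintype.card_fin, Fintype.card_fin] at f5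
  have f6 : (∑ j, (∑ K, (y K - x j)⁻¹)^2)
      = ∑ j, ∑ K, ∑ L, (y K - x j)⁻¹ * (y L - x j)⁻¹ :=
    Finset.sum_congr rfl fun j _ => by rw [sq, Finset.sum_mul_sum]
  have f6' : (∑ K, (∑ j, (y K - x j)⁻¹)^2)
      = ∑ K, ∑ j, ∑ k, (y K - x j)⁻¹ * (y K - x k)⁻¹ :=
    Finset.sum_congr rfl fun K _ => by rw [sq, Finset.sum_mul_sum]
  have f7 : (∑ j, ∑ K, ((y K - x j)^2)⁻¹) = ∑ K, ∑ j, ((y K - x j)^2)⁻¹ :=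
    Finset.sum_comm
  have f8 := alg8 x
  have f8' := alg8 y
  have f9 : (∑ j, ∑ K, ∑ k, (y K - x j)⁻¹ * (y K - x k)⁻¹)
      = ∑ K, ∑ j, ∑ k, (y K - x j)⁻¹ * (y K - x k)⁻¹ := Finset.sum_comm
  have f10 : (∑ K, ∑ j, ∑ L, (y K - x j)⁻¹ * (y L - x j)⁻¹)
      = ∑ j, ∑ K, ∑ L, (y K - x j)⁻¹ * (y L - x j)⁻¹ := Finset.sum_comm
  linear_combination hL - hR + (2*lam) * f1 + (2*lam) * f1' + (-(lam^2)) * f2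
    + (lam^2) * f2' + (lam*(lam-1)) * f8 + (-(lam*(lam-1))) * f8'
    + (-(lam^2)) * f3 + (-(lam^2)) * f4 + (2*lam) * f5 + (-(lam^2)) * f6
    + (lam^2) * f6' + (lam^2 - lam) * f7 + (-(lam^2)) * f9 + (lam^2) * f10

end Alg
theorem stmt_16 (N M : ℕ) (hN : 1 ≤ N) (hM : 1 ≤ M) (lam : ℝ) (hlam : 0 < lam) :
    ∀ (x : Fin N → ℝ) (y : Fin M → ℝ),
      (∀ j k : Fin N, j < k → x j < x k) →
      (∀ J K : Fin M, J < K → y J < y K) →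
      x ⟨N-1, by omega⟩ < y ⟨0, by omega⟩ →
      calogeroH N lam (fun x' => FNM N M lam x' y) x =
        calogeroH M lam (fun y' => FNM N M lam x y') y +
          (lam * ((N : ℝ) - M)^2 + ((N : ℝ) + M) * (1 - lam)) * FNM N M lam x y := by
  intro x y hx hy hxy
  have hxle : ∀ j : Fin N, x j ≤ x ⟨N-1, by omega⟩ := by
    intro j
    have hj := j.isLt
    rcases eq_or_lt_of_le (Nat.le_pred_of_lt hj) with h | h
    · exact le_of_eq (congrArg x (Fin.ext h))
    · exact le_of_lt (hx j ⟨N-1, by omega⟩ h)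
  have hyle : ∀ K : Fin M, y ⟨0, by omega⟩ ≤ y K := by
    intro K
    rcases Nat.eq_zero_or_pos K.val with h | h
    · exact le_of_eq (congrArg y (Fin.ext h.symm))
    · exact le_of_lt (hy ⟨0, by omega⟩ K h)
  have hxyall : ∀ (i : Fin N) (K : Fin M), x i < y K := fun i K =>
    lt_of_le_of_lt (hxle i) (lt_of_lt_of_le hxy (hyle K))
  have hxne : ∀ j k : Fin N, j ≠ k → x j ≠ x k := by
    intro j k h
    rcases lt_trichotomy j k with hl | he | hl
    · exact ne_of_lt (hx j k hl)
    · exact absurd he h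
    · exact ne_of_gt (hx k j hl)
  have hyne : ∀ J K : Fin M, J ≠ K → y J ≠ y K := by
    intro J K h
    rcases lt_trichotomy J K with hl | he | hl
    · exact ne_of_lt (hy J K hl)
    · exact absurd he h
    · exact ne_of_gt (hy K J hl)
  have hxyne : ∀ (j : Fin N) (K : Fin M), x j ≠ y K := fun j K => ne_of_lt (hxyall j K)
  have hL : calogeroH N lam (fun x' => FNM N M lam x' y) x
      = ((∑ j, ((x j)^2
          - (-1 - lam * (∑ k, if k ≠ j then ((x j - x k)^2)⁻¹ else 0)
              + lam * ∑ K, ((y K - x j)^2)⁻¹)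
          - (-(x j) + lam * (∑ k, if k ≠ j then (x j - x k)⁻¹ else 0)
              + lam * ∑ K, (y K - x j)⁻¹)^2))
        + 2*lam*(lam-1) * (∑ j, ∑ k, if j < k then ((x j - x k)^2)⁻¹ else 0))
        * FNM N M lam x y := by
    simp only [calogeroH]
    have h1 : ∀ j : Fin N, - pd j (pd j (fun x' => FNM N M lam x' y)) x
        + (x j)^2 * FNM N M lam x y
        = ((x j)^2
          - (-1 - lam * (∑ k, if k ≠ j then ((x j - x k)^2)⁻¹ else 0)
              + lam * ∑ K, ((y K - x j)^2)⁻¹)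
          - (-(x j) + lam * (∑ k, if k ≠ j then (x j - x k)⁻¹ else 0)
              + lam * ∑ K, (y K - x j)⁻¹)^2) * FNM N M lam x y := by
      intro j
      rw [pd2_x N M lam x y j hx hy hxyall]
      ring
    have h2 : ∀ j k : Fin N, (if j < k then FNM N M lam x y / (x j - x k)^2 else 0)
        = (if j < k then ((x j - x k)^2)⁻¹ else 0) * FNM N M lam x y := by
      intro j k
      by_cases h : j < k
      · rw [if_pos h, if_pos h, div_eq_mul_inv, mul_comm]
      · rw [if_neg h, if_neg h, zero_mul]
    rw [Finset.sum_congr rfl fun j _ => h1 j]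
    rw [Finset.sum_congr rfl fun j (_ : j ∈ Finset.univ) =>
      Finset.sum_congr rfl fun k _ => h2 j k]
    rw [Finset.sum_congr rfl fun j (_ : j ∈ Finset.univ) => (Finset.sum_mul _ _ _).symm,
      ← Finset.sum_mul, ← Finset.sum_mul]
    ring
  have hR : calogeroH M lam (fun y' => FNM N M lam x y') y
      = ((∑ K, ((y K)^2
          - (1 - lam * (∑ L, if L ≠ K then ((y K - y L)^2)⁻¹ else 0)
              + lam * ∑ j, ((y K - x j)^2)⁻¹)
          - (y K + lam * (∑ L, if L ≠ K then (y K - y L)⁻¹ else 0)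
              - lam * ∑ j, (y K - x j)⁻¹)^2))
        + 2*lam*(lam-1) * (∑ J, ∑ K, if J < K then ((y J - y K)^2)⁻¹ else 0))
        * FNM N M lam x y := by
    simp only [calogeroH]
    have h1 : ∀ K : Fin M, - pd K (pd K (fun y' => FNM N M lam x y')) y
        + (y K)^2 * FNM N M lam x y
        = ((y K)^2
          - (1 - lam * (∑ L, if L ≠ K then ((y K - y L)^2)⁻¹ else 0)
              + lam * ∑ j, ((y K - x j)^2)⁻¹)
          - (y K + lam * (∑ L, if L ≠ K then (y K - y L)⁻¹ else 0)
              - lam * ∑ j, (y K - x j)⁻¹)^2) * FNM N M lam x y := by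
      intro K
      rw [pd2_y N M lam x y K hx hy hxyall]
      ring
    have h2 : ∀ J K : Fin M, (if J < K then FNM N M lam x y / (y J - y K)^2 else 0)
        = (if J < K then ((y J - y K)^2)⁻¹ else 0) * FNM N M lam x y := by
      intro J K
      by_cases h : J < K
      · rw [if_pos h, if_pos h, div_eq_mul_inv, mul_comm]
      · rw [if_neg h, if_neg h, zero_mul]
    rw [Finset.sum_congr rfl fun K _ => h1 K]
    rw [Finset.sum_congr rfl fun J (_ : J ∈ Finset.univ) =>
      Finset.sum_congr rfl fun K _ => h2 J K]
    rw [Finset.sum_congr rfl fun J (_ : J ∈ Finset.univ) => (Finset.sum_mul _ _ _).symm,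
      ← Finset.sum_mul, ← Finset.sum_mul]
    ring
  rw [hL, hR]
  have hk := key_alg N M lam x y hxne hyne hxyne
  linear_combination (FNM N M lam x y) * hk
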